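/- Let X be a minimal subshift arising from a primitive substitution, and for k ∈ ℕ let A⁺(k) be the set of one-sided sequences x⁺ ∈ X_{[0,∞)} with card(Γₖ⁻(x⁺)) > 1. If A⁺(k) is finite for every k, then for every b ∈ L_k(X) there exists an admissible word a with ba ∈ L(X) and {b} = ωₖ⁻(a); consequently X is λ-synchronizing. -/

import Mathlib

variable {A : Type*} [Fintype A] [TopologicalSpace A] [DiscreteTopology A]

/-- `w` occurs in the bi-infinite sequence `x`. -/
def occursIn (w : List A) (x : ℤ → A) : Prop :=
  ∃ i : ℤ, ∀ j : Fin w.length, x (i + (j : ℤ)) = w.get j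

/-- The language of a set of bi-infinite sequences. -/
def Lang (X : Set (ℤ → A)) (w : List A) : Prop := ∃ x ∈ X, occursIn w x

/-- The right-infinite one-sided sequences of `X`. -/
def XPlus (X : Set (ℤ → A)) : Set (ℕ → A) :=
  {y | ∃ x ∈ X, ∀ n : ℕ, x (n : ℤ) = y n}

/-- `Γₖ⁻(y)` for a right-infinite sequence `y`: length-`k` words `b` such that
`b y` is realized in `X` (with `b` at coordinates `0,…,k-1` and `y` shifted to
coordinates `k, k+1, …`). -/
def GammaInf (X : Set (ℤ → A)) (k : ℕ) (y : ℕ → A) : Set (List A) :=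
  {b | b.length = k ∧ ∃ x ∈ X, (∀ j : Fin b.length, x (j : ℤ) = b.get j) ∧
    ∀ n : ℕ, x ((k : ℤ) + (n : ℤ)) = y n}

/-- `Γₖ⁻(a)` for a finite word `a`. -/
def GammaW (X : Set (ℤ → A)) (k : ℕ) (a : List A) : Set (List A) :=
  {b | b.length = k ∧ Lang X (b ++ a)}

/-- `ωₖ⁻(a)` for a finite word `a`. -/
def OmegaW (X : Set (ℤ → A)) (k : ℕ) (a : List A) : Set (List A) :=
  {b | b.length = k ∧ ∀ c : List A, Lang X (a ++ c) → Lang X (b ++ a ++ c)}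

/-!
Take a point `x` of `X` reading `w` at `0` whose ray after `w` has a unique length-`k` left
extension `b`. By compactness, every `b' ≠ b` already fails to extend some finite prefix of that
ray, so a long enough prefix `a` has `Γₖ⁻(a) = {b}`, and then also `ωₖ⁻(a) = {b}`.
Such a point exists: by minimality `w` occurs infinitely often to the right in any point, and
if all the rays following these occurrences lay in the finite set `A⁺(k)`, two of them would
coincide. The point would then be eventually periodic, which by minimality forces all of `X`
to be periodic, and in a periodic system no ray has two left extensions.
-/

open Filter Function

section

variable {α : Type*}

def OccursAt (x : ℤ → α) (i : ℤ) (w : List α) : Prop :=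
  ∀ j : Fin w.length, x (i + j) = w.get j

def window (x : ℤ → α) (m : ℤ) (n : ℕ) : List α :=
  List.ofFn fun t : Fin n => x (m + t)

def ray (x : ℤ → α) (m : ℤ) : ℕ → α := fun n => x (m + n)

@[simp]
lemma length_window (x : ℤ → α) (m : ℤ) (n : ℕ) : (window x m n).length = n := by
  simp [window]

lemma occursAt_iff_getElem {x : ℤ → α} {i : ℤ} {w : List α} :
    OccursAt x i w ↔ ∀ (j : ℕ) (hj : j < w.length), x (i + j) = w[j] :=
  ⟨fun h j hj => h ⟨j, hj⟩, fun h j => h j j.2⟩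

lemma occursAt_window_iff {z x : ℤ → α} {i m : ℤ} {n : ℕ} :
    OccursAt z i (window x m n) ↔ ∀ j < n, z (i + j) = x (m + j) := by
  simp [occursAt_iff_getElem, window]

lemma occursAt_window (x : ℤ → α) (m : ℤ) (n : ℕ) : OccursAt x m (window x m n) :=
  occursAt_window_iff.2 fun _ _ => rfl

lemma window_eq_of_occursAt {x : ℤ → α} {i : ℤ} {w : List α} (h : OccursAt x i w) :
    window x i w.length = w :=
  List.ext_getElem (by simp) fun j _ hj => by simp [window, ← occursAt_iff_getElem.1 h j hj]

lemma occursAt_append {x : ℤ → α} {i : ℤ} {u v : List α} :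
    OccursAt x i (u ++ v) ↔ OccursAt x i u ∧ OccursAt x (i + u.length) v := by
  simp only [occursAt_iff_getElem, List.length_append]
  refine ⟨fun h => ⟨fun j hj => ?_, fun j hj => ?_⟩, fun ⟨hu, hv⟩ j hj => ?_⟩
  · simpa [List.getElem_append_left hj] using h j (by omega)
  · simpa [add_assoc] using h (u.length + j) (by omega)
  · by_cases hju : j < u.length
    · simpa [List.getElem_append_left hju] using hu j hju
    · obtain ⟨t, rfl⟩ := Nat.exists_eq_add_of_le (not_lt.1 hju)
      simpa [add_assoc] using hv t (by omega)

lemma window_add (x : ℤ → α) (m : ℤ) (s t : ℕ) :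
    window x m (s + t) = window x m s ++ window x (m + s) t := by
  have h : OccursAt x m (window x m s ++ window x (m + s) t) :=
    occursAt_append.2 ⟨occursAt_window x m s, by simpa using occursAt_window x (m + s) t⟩
  simpa using window_eq_of_occursAt h

lemma occursAt_shift {x : ℤ → α} {n i : ℤ} {w : List α} :
    OccursAt (fun t => x (t + n)) i w ↔ OccursAt x (i + n) w := by
  simp only [OccursAt, add_right_comm]

lemma isClopen_setOf_occursAt [TopologicalSpace α] [DiscreteTopology α] (i : ℤ) (w : List α) :
    IsClopen {z : ℤ → α | OccursAt z i w} := by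
  have h : {z : ℤ → α | OccursAt z i w} =
      (fun z (j : Fin w.length) => z (i + j)) ⁻¹' {w.get} := by
    ext z
    simp [OccursAt, funext_iff]
  exact h ▸ (isClopen_discrete _).preimage (by fun_prop)

def IsShiftInvariant (X : Set (ℤ → α)) : Prop :=
  ∀ x : ℤ → α, x ∈ X ↔ (fun i => x (i + 1)) ∈ X

def HasDenseOrbits [TopologicalSpace α] (X : Set (ℤ → α)) : Prop :=
  ∀ x ∈ X, ∀ y ∈ X, y ∈ closure {z : ℤ → α | ∃ n : ℤ, z = fun i => x (i + n)}

/-- The set `A⁺(k)` of the paper. -/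
def ambiguousRays (X : Set (ℤ → α)) (k : ℕ) : Set (ℕ → α) :=
  {y | y ∈ XPlus X ∧
    ∃ b b' : List α, b ≠ b' ∧ b ∈ GammaInf X k y ∧ b' ∈ GammaInf X k y}

lemma IsShiftInvariant.shift_mem {X : Set (ℤ → α)} (hX : IsShiftInvariant X) {x : ℤ → α}
    (hx : x ∈ X) (n : ℤ) : (fun i => x (i + n)) ∈ X := by
  induction n using Int.induction_on with
  | zero => simpa using hx
  | succ m ih => simpa only [add_assoc, add_comm (1 : ℤ)] using (hX _).1 ih
  | pred m ih => exact (hX _).2 (by simpa [add_assoc] using ih)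

variable {X : Set (ℤ → α)} {k : ℕ} {a b u v w : List α}

lemma lang_iff : Lang X w ↔ ∃ x ∈ X, ∃ i, OccursAt x i w := Iff.rfl

lemma lang_of_occursAt {x : ℤ → α} (hx : x ∈ X) {i : ℤ} (h : OccursAt x i w) : Lang X w :=
  ⟨x, hx, i, h⟩

lemma Lang.of_append_left (h : Lang X (u ++ v)) : Lang X u :=
  let ⟨_, hx, _, hi⟩ := lang_iff.1 h
  lang_of_occursAt hx (occursAt_append.1 hi).1

lemma Lang.of_append_right (h : Lang X (u ++ v)) : Lang X v :=
  let ⟨_, hx, _, hi⟩ := lang_iff.1 h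
  lang_of_occursAt hx (occursAt_append.1 hi).2

lemma Lang.exists_append_left (h : Lang X u) (k : ℕ) :
    ∃ b, b.length = k ∧ Lang X (b ++ u) := by
  obtain ⟨x, hx, i, hi⟩ := lang_iff.1 h
  exact ⟨window x (i - k) k, length_window .., lang_of_occursAt hx
    (occursAt_append.2 ⟨occursAt_window x (i - k) k, by simpa using hi⟩)⟩

lemma IsShiftInvariant.exists_occursAt_zero (hX : IsShiftInvariant X) (h : Lang X w) :
    ∃ x ∈ X, OccursAt x 0 w := by
  obtain ⟨x, hx, i, hi⟩ := lang_iff.1 h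
  exact ⟨_, hX.shift_mem hx i, occursAt_shift.2 (by simpa using hi)⟩

lemma omegaW_subset_gammaW (ha : Lang X a) : OmegaW X k a ⊆ GammaW X k a :=
  fun _ hb => ⟨hb.1, by simpa using hb.2 [] (by simpa using ha)⟩

lemma mem_omegaW_of_gammaW_subset (hb : b.length = k) (h : GammaW X k a ⊆ {b}) :
    b ∈ OmegaW X k a := by
  refine ⟨hb, fun c hc => ?_⟩
  obtain ⟨b', hb', hlang⟩ := hc.exists_append_left k
  rw [← List.append_assoc] at hlang
  obtain rfl : b' = b := h ⟨hb', hlang.of_append_left⟩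
  exact hlang

lemma omegaW_eq_singleton (ha : Lang X a) (hb : b.length = k) (h : GammaW X k a ⊆ {b}) :
    OmegaW X k a = {b} :=
  ((omegaW_subset_gammaW ha).trans h).antisymm
    (Set.singleton_subset_iff.2 (mem_omegaW_of_gammaW_subset hb h))

lemma ray_shift (x : ℤ → α) (p m : ℤ) : ray (fun i => x (i + p)) m = ray x (p + m) := by
  funext n
  simp only [ray]
  ring_nf

lemma gammaInf_subsingleton_of_periodic {d : ℕ} (hd : 0 < d) (hper : ∀ u ∈ X, Periodic u d)
    (k : ℕ) (y : ℕ → α) : (GammaInf X k y).Subsingleton := by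
  rintro b₁ ⟨hl₁, u, hu, hb₁, hy₁⟩ b₂ ⟨hl₂, v, hv, hb₂, hy₂⟩
  obtain rfl : u = v := by
    funext i
    set n := (k - i).toNat
    obtain ⟨t, ht⟩ := Int.le.dest (show (k : ℤ) ≤ i + n * d by
      nlinarith [Int.self_le_toNat (k - i)])
    calc u i = u (i + n * d) := ((hper u hu).nat_mul n i).symm
      _ = v (i + n * d) := by rw [← ht, hy₁, hy₂]
      _ = v i := (hper v hv).nat_mul n i
  exact List.ext_get (hl₁.trans hl₂.symm) fun j h₁ h₂ =>
    (hb₁ ⟨j, h₁⟩).symm.trans (hb₂ ⟨j, h₂⟩)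

variable [TopologicalSpace α] [DiscreteTopology α] [Finite α]

lemma mem_gammaInf_of_forall_lang (hcl : IsClosed X) (hX : IsShiftInvariant X)
    (hb : b.length = k) {x : ℤ → α} {m : ℤ} (h : ∀ t : ℕ, Lang X (b ++ window x m t)) :
    b ∈ GammaInf X k (ray x m) := by
  set K : ℕ → Set (ℤ → α) := fun t => X ∩ {z | OccursAt z 0 (b ++ window x m t)}
  have hK_closed (t : ℕ) : IsClosed (K t) := hcl.inter (isClopen_setOf_occursAt _ _).isClosed
  have hK_anti (t : ℕ) : K (t + 1) ⊆ K t := by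
    rintro z ⟨hz, hocc⟩
    rw [Set.mem_ofPred_eq, window_add, ← List.append_assoc, occursAt_append] at hocc
    exact ⟨hz, hocc.1⟩
  have hK_nonempty (t : ℕ) : (K t).Nonempty := hX.exists_occursAt_zero (h t)
  obtain ⟨z, hz⟩ := IsCompact.nonempty_iInter_of_sequence_nonempty_isCompact_isClosed K
    hK_anti hK_nonempty (hK_closed 0).isCompact hK_closed
  simp only [Set.mem_iInter] at hz
  refine ⟨hb, z, (hz 0).1, fun j => by simpa using (occursAt_append.1 (hz 0).2).1 j,
    fun n => ?_⟩
  have hocc := (occursAt_append.1 (hz (n + 1)).2).2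
  rw [occursAt_window_iff] at hocc
  simpa [hb, ray] using hocc n (by omega)

lemma eventually_not_lang_append_window (hcl : IsClosed X) (hX : IsShiftInvariant X)
    (hb : b.length = k) {x : ℤ → α} {m : ℤ} (hnot : b ∉ GammaInf X k (ray x m)) :
    ∀ᶠ n in atTop, ¬ Lang X (b ++ window x m n) := by
  obtain ⟨t, ht⟩ : ∃ t, ¬ Lang X (b ++ window x m t) := by
    by_contra! h
    exact hnot (mem_gammaInf_of_forall_lang hcl hX hb h)
  filter_upwards [eventually_ge_atTop t] with n hn hlang
  obtain ⟨s, rfl⟩ := Nat.exists_eq_add_of_le hn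
  rw [window_add, ← List.append_assoc] at hlang
  exact ht hlang.of_append_left

lemma exists_gammaW_window_subsingleton (hcl : IsClosed X) (hX : IsShiftInvariant X)
    {x : ℤ → α} (hx : x ∈ X) {m : ℤ} (huniq : (GammaInf X k (ray x m)).Subsingleton) :
    ∃ n, (GammaW X k (window x m n)).Subsingleton := by
  set b := window x (m - k) k
  have hb : b ∈ GammaInf X k (ray x m) := by
    refine ⟨length_window .., _, hX.shift_mem hx (m - k), fun j => ?_, fun n => ?_⟩
    · rw [add_comm]
      exact occursAt_window x (m - k) k j
    · simp only [ray]
      ring_nf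
  have hfin : {b' : List α | b'.length = k ∧ b' ≠ b}.Finite :=
    (List.finite_length_eq α k).subset fun _ h => h.1
  obtain ⟨n, hn⟩ := ((eventually_all_finite hfin).2 fun b' hb' =>
    eventually_not_lang_append_window hcl hX hb'.1 fun hmem => hb'.2 (huniq hmem hb)).exists
  refine ⟨n, (Set.subsingleton_singleton (a := b)).anti fun b' hb' => ?_⟩
  by_contra hne
  exact hn b' ⟨hb'.1, hne⟩ hb'.2

lemma not_bddAbove_setOf_occursAt (hcl : IsClosed X) (hX : IsShiftInvariant X)
    (hmin : HasDenseOrbits X) (hw : Lang X w) {x : ℤ → α} (hx : x ∈ X) :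
    ¬ BddAbove {p | OccursAt x p w} := by
  obtain ⟨x₀, hx₀, h₀⟩ := hX.exists_occursAt_zero hw
  have hcover : X ⊆ ⋃ n : ℤ, {z | OccursAt z n w} := by
    intro z hz
    obtain ⟨_, hu, n, rfl⟩ := mem_closure_iff_nhds.1 (hmin z hz x₀ hx₀) _
      ((isClopen_setOf_occursAt 0 w).isOpen.mem_nhds h₀)
    exact Set.mem_iUnion.2 ⟨n, by simpa using occursAt_shift.1 hu⟩
  obtain ⟨F, hF⟩ := hcl.isCompact.elim_finite_subcover _
    (fun n => (isClopen_setOf_occursAt n w).isOpen) hcover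
  obtain ⟨L, hL⟩ := F.finite_toSet.bddBelow
  rintro ⟨M, hM⟩
  -- shifting `x` far enough pushes one of the finitely many occurrence positions past `M`
  obtain ⟨n, hnF, hn⟩ := Set.mem_iUnion₂.1 (hF (hX.shift_mem hx (M + 1 - L)))
  have h₁ := hM (occursAt_shift.1 hn)
  have h₂ := hL hnF
  omega

lemma periodic_of_ray_eq (hcl : IsClosed X) (hX : IsShiftInvariant X) (hmin : HasDenseOrbits X)
    {x : ℤ → α} (hx : x ∈ X) {a : ℤ} {d : ℕ} (h : ray x a = ray x (a + d)) :
    ∀ u ∈ X, Periodic u d := by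
  intro u hu i
  obtain ⟨q, hocc, hq⟩ := not_bddAbove_iff.1 (not_bddAbove_setOf_occursAt hcl hX hmin
    (lang_of_occursAt hu (occursAt_window u i (d + 1))) hx) a
  obtain ⟨n, rfl⟩ := Int.le.dest hq.le
  rw [Set.mem_ofPred_eq, occursAt_window_iff] at hocc
  have hxper : x (a + n) = x (a + n + d) := by
    simpa [ray, add_right_comm] using congrFun h n
  calc u (i + d) = x (a + n + d) := (hocc d (by omega)).symm
    _ = x (a + n) := hxper.symm
    _ = u i := by simpa using hocc 0 (by omega)

lemma exists_occursAt_zero_gammaInf_subsingleton (hcl : IsClosed X) (hX : IsShiftInvariant X)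
    (hmin : HasDenseOrbits X)
    (hfin : ∀ k, (ambiguousRays X k).Finite)
    (hw : Lang X w) (k r : ℕ) :
    ∃ x ∈ X, OccursAt x 0 w ∧ (GammaInf X k (ray x r)).Subsingleton := by
  obtain ⟨x, hx, -⟩ := lang_iff.1 hw
  obtain ⟨p, hp, huniq⟩ :
      ∃ p ∈ {p | OccursAt x p w}, (GammaInf X k (ray x (p + r))).Subsingleton := by
    by_contra! hbad
    have hmaps : Set.MapsTo (fun p => ray x (p + r)) {p | OccursAt x p w}
        (ambiguousRays X k) := by
      intro p hp
      obtain ⟨b, hb, b', hb', hne⟩ := hbad p hp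
      exact ⟨⟨_, hX.shift_mem hx (p + r), fun n => by simp [ray, add_comm]⟩,
        b, b', hne, hb, hb'⟩
    -- infinitely many occurrences of `w`, but only finitely many rays with two left extensions
    obtain ⟨p, hp, p', hp', hne, heq⟩ := (Set.infinite_of_not_bddAbove
      (not_bddAbove_setOf_occursAt hcl hX hmin hw hx)).exists_ne_map_eq_of_mapsTo hmaps (hfin k)
    wlog hlt : p < p' generalizing p p'
    · exact this p' hp' p hp hne.symm heq.symm (lt_of_le_of_ne (not_lt.1 hlt) hne.symm)
    obtain ⟨d, rfl⟩ := Int.le.dest hlt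
    have hray : ray x (p + r) = ray x (p + r + (d + 1 : ℕ)) := by
      convert heq using 2
      push_cast
      ring
    exact (hbad p hp).not_subsingleton (gammaInf_subsingleton_of_periodic d.succ_pos
      (periodic_of_ray_eq hcl hX hmin hx hray) k _)
  exact ⟨_, hX.shift_mem hx p, occursAt_shift.2 (by simpa using hp), by rwa [ray_shift]⟩

lemma exists_append_gammaW_subsingleton (hcl : IsClosed X) (hX : IsShiftInvariant X)
    (hmin : HasDenseOrbits X)
    (hfin : ∀ k, (ambiguousRays X k).Finite)
    (hw : Lang X w) (k : ℕ) : ∃ a, Lang X (w ++ a) ∧ (GammaW X k a).Subsingleton := by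
  obtain ⟨x, hx, hw₀, huniq⟩ :=
    exists_occursAt_zero_gammaInf_subsingleton hcl hX hmin hfin hw k w.length
  obtain ⟨n, hn⟩ := exists_gammaW_window_subsingleton hcl hX hx huniq
  have hwa : OccursAt x 0 (w ++ window x w.length n) :=
    occursAt_append.2 ⟨hw₀, by simpa using occursAt_window x w.length n⟩
  exact ⟨window x w.length n, lang_of_occursAt hx hwa, hn⟩

end

theorem stmt12_general (X : Set (ℤ → A)) (hclosed : IsClosed X)
    (hinv : ∀ x : ℤ → A, x ∈ X ↔ (fun i => x (i + 1)) ∈ X)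
    (hmin : ∀ x ∈ X, ∀ y ∈ X,
      y ∈ closure {z : ℤ → A | ∃ n : ℤ, z = fun i => x (i + n)})
    (hfin : ∀ k : ℕ, {y : ℕ → A | y ∈ XPlus X ∧
        ∃ b b' : List A, b ≠ b' ∧ b ∈ GammaInf X k y ∧
          b' ∈ GammaInf X k y}.Finite) :
    (∀ (k : ℕ) (b : List A), b.length = k → Lang X b →
      ∃ a : List A, Lang X (b ++ a) ∧ OmegaW X k a = {b}) ∧
    (∀ w : List A, Lang X w → ∀ k : ℕ, ∃ v : List A,
      (Lang X v ∧ ∀ b ∈ GammaW X k v, b ∈ OmegaW X k v) ∧ Lang X (w ++ v)) := by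
  have hext {w : List A} (hw : Lang X w) (k : ℕ) :
      ∃ a, Lang X (w ++ a) ∧ (GammaW X k a).Subsingleton :=
    exists_append_gammaW_subsingleton hclosed hinv hmin hfin hw k
  refine ⟨fun k b hb hbL => ?_, fun w hw k => ?_⟩
  · obtain ⟨a, ha, huniq⟩ := hext hbL k
    have hbΓ : b ∈ GammaW X k a := ⟨hb, ha⟩
    exact ⟨a, ha,
      omegaW_eq_singleton ha.of_append_right hb (huniq.eq_singleton_of_mem hbΓ).subset⟩
  · obtain ⟨v, hv, huniq⟩ := hext hw k
    exact ⟨v, ⟨hv.of_append_right, fun b hb =>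
      mem_omegaW_of_gammaW_subset hb.1 (huniq.eq_singleton_of_mem hb).subset⟩, hv⟩

/-- Theorem 4.1: for a minimal subshift (arising from a primitive substitution)
in which each set A⁺(k) of right-infinite rays with more than one length-k
left-extension is finite, every word b of length k satisfies {b} = ωₖ⁻(a) for
some right extension a; consequently X is λ-synchronizing. -/
theorem stmt12 (X : Set (ℤ → A)) (hne : X.Nonempty) (hclosed : IsClosed X)
    (hinv : ∀ x : ℤ → A, x ∈ X ↔ (fun i => x (i + 1)) ∈ X)
    (hmin : ∀ x ∈ X, ∀ y ∈ X,
      y ∈ closure {z : ℤ → A | ∃ n : ℤ, z = fun i => x (i + n)})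
    (hfin : ∀ k : ℕ, {y : ℕ → A | y ∈ XPlus X ∧
        ∃ b b' : List A, b ≠ b' ∧ b ∈ GammaInf X k y ∧
          b' ∈ GammaInf X k y}.Finite) :
    (∀ (k : ℕ) (b : List A), b.length = k → Lang X b →
      ∃ a : List A, Lang X (b ++ a) ∧ OmegaW X k a = {b}) ∧
    (∀ w : List A, Lang X w → ∀ k : ℕ, ∃ v : List A,
      (Lang X v ∧ ∀ b ∈ GammaW X k v, b ∈ OmegaW X k v) ∧ Lang X (w ++ v)) :=
  stmt12_general X hclosed hinv hmin hfin
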